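/- arXiv:1207.6357 — 2 statements merged into one kernel-verified Lean document; each statement's English description precedes it below -/
import Mathlib

section
/- The class of all strictly descending finite sequences of natural numbers forms a well-founded tree (closed under initial segments and with no infinite path), and the set coded by this tree under the recursive tree-decoding is the von Neumann ordinal ω. -/
/-- `τ` is a daughter of `σ` in the tree `T`: it extends `σ` by one entry. -/
def Daughter {C : Type} (T : Set (List C)) (τ σ : List C) : Prop :=
  τ ∈ T ∧ ∃ c : C, τ = σ ++ [c]

/-- Decoding of the nodes of a well-founded tree: a node decodes to the set of
decodings of its daughters. -/
noncomputable def decode {C : Type} (T : Set (List C))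
    (hwf : WellFounded (Daughter T)) : List C → PSet :=
  hwf.fix fun σ ih =>
    PSet.mk {c : C // σ ++ [c] ∈ T} fun c => ih (σ ++ [c.1]) ⟨c.2, c.1, rfl⟩

/-- The tree of strictly descending finite sequences of natural numbers. -/
def descTree : Set (List ℕ) := {σ | σ.Chain' (· > ·)}

/-!
Rank every node of `descTree` by its last entry, and the root by `ω`. A daughter `σ ++ [c]`
has the strictly smaller rank `c`, so the tree is well founded. The daughters of a node of
rank `r` are exactly its extensions by the naturals `c < r` (every ordinal below `r ≤ ω` is
a natural), so by well-founded induction each node decodes to the von Neumann ordinal of its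
rank; at the root this is `ω`.
-/

open Ordinal

theorem ZFSet.mem_mk_mk {α : Type*} {f : α → PSet} {x : ZFSet} :
    x ∈ ZFSet.mk (PSet.mk α f) ↔ ∃ a, ZFSet.mk (f a) = x := by
  induction x using Quotient.ind with
  | _ x =>
    rw [ZFSet.mk_eq, ZFSet.mk_mem_iff, PSet.mem_def]
    simp only [PSet.mk_func, ZFSet.eq]
    exact exists_congr fun _ => PSet.Equiv.comm

theorem ZFSet.mk_ofNat_eq_toZFSet (n : ℕ) : ZFSet.mk (PSet.ofNat n) = toZFSet n := by
  induction n with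
  | zero => exact toZFSet_zero.symm
  | succ n ih =>
    rw [Nat.cast_succ, toZFSet_add_one, ← ih]
    rfl

theorem ZFSet.omega_eq_toZFSet_omega0 : ZFSet.omega = toZFSet ω := by
  ext x
  rw [ZFSet.omega, PSet.omega, ZFSet.mem_mk_mk, mem_toZFSet_iff]
  constructor
  · rintro ⟨⟨n⟩, rfl⟩
    exact ⟨n, natCast_lt_omega0 n, (ZFSet.mk_ofNat_eq_toZFSet n).symm⟩
  · rintro ⟨a, ha, rfl⟩
    obtain ⟨n, rfl⟩ := lt_omega0.1 ha
    exact ⟨⟨n⟩, ZFSet.mk_ofNat_eq_toZFSet n⟩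

theorem mem_mk_decode {C : Type} {T : Set (List C)} {hwf : WellFounded (Daughter T)}
    {σ : List C} {x : ZFSet} :
    x ∈ ZFSet.mk (decode T hwf σ) ↔
      ∃ c, σ ++ [c] ∈ T ∧ ZFSet.mk (decode T hwf (σ ++ [c])) = x := by
  rw [decode, WellFounded.fix_eq, ZFSet.mem_mk_mk, Subtype.exists]
  simp only [exists_prop]

noncomputable def descRank (σ : List ℕ) : Ordinal.{0} :=
  σ.getLast?.elim ω (↑)

@[simp]
theorem descRank_nil : descRank [] = ω := rfl

@[simp]
theorem descRank_append_singleton (σ : List ℕ) (c : ℕ) : descRank (σ ++ [c]) = c := by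
  simp [descRank]

theorem descRank_le_omega0 (σ : List ℕ) : descRank σ ≤ ω := by
  cases h : σ.getLast? <;> simp [descRank, h, (natCast_lt_omega0 _).le]

theorem append_singleton_mem_descTree {σ : List ℕ} {c : ℕ} :
    σ ++ [c] ∈ descTree ↔ σ ∈ descTree ∧ (c : Ordinal) < descRank σ := by
  show (σ ++ [c]).IsChain (· > ·) ↔ σ.IsChain (· > ·) ∧ _
  rw [List.isChain_append]
  cases h : σ.getLast? <;> simp [descRank, h, natCast_lt_omega0]

theorem descRank_lt_of_daughter {σ τ : List ℕ} (h : Daughter descTree τ σ) :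
    descRank τ < descRank σ := by
  obtain ⟨hτ, c, rfl⟩ := h
  simpa using (append_singleton_mem_descTree.1 hτ).2

theorem descTree_wf : WellFounded (Daughter descTree) :=
  Subrelation.wf descRank_lt_of_daughter (InvImage.wf descRank wellFounded_lt)

theorem mk_decode_descTree (hwf : WellFounded (Daughter descTree)) {σ : List ℕ}
    (hσ : σ ∈ descTree) : ZFSet.mk (decode descTree hwf σ) = toZFSet (descRank σ) := by
  induction σ using hwf.induction with
  | _ σ ih =>
  have decode_daughter (c : ℕ) (hc : σ ++ [c] ∈ descTree) :
      ZFSet.mk (decode descTree hwf (σ ++ [c])) = toZFSet c := by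
    rw [ih _ ⟨hc, c, rfl⟩ hc, descRank_append_singleton]
  ext x
  rw [mem_mk_decode, mem_toZFSet_iff]
  constructor
  · rintro ⟨c, hc, rfl⟩
    exact ⟨c, (append_singleton_mem_descTree.1 hc).2, (decode_daughter c hc).symm⟩
  · rintro ⟨a, ha, rfl⟩
    obtain ⟨n, rfl⟩ := lt_omega0.1 (ha.trans_le (descRank_le_omega0 σ))
    have hn : σ ++ [n] ∈ descTree := append_singleton_mem_descTree.2 ⟨hσ, ha⟩
    exact ⟨n, hn, decode_daughter n hn⟩

/-- The tree of strictly descending sequences of naturals is well founded (has no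
infinite path), and its root decodes to the von Neumann ordinal `ω`. -/
theorem descTree_wf_and_decodes_omega :
    WellFounded (Daughter descTree) ∧
      ∀ hwf : WellFounded (Daughter descTree),
        ZFSet.mk (decode descTree hwf []) = ZFSet.omega := by
  refine ⟨descTree_wf, fun hwf => ?_⟩
  rw [mk_decode_descTree hwf List.isChain_nil, descRank_nil, ZFSet.omega_eq_toZFSet_omega0]
end

section
/- Any set coded by a well-founded tree of finite sequences over a type C is hereditarily of cardinality at most the cardinality of C^{<ω} (finite sequences from C); in particular for infinite C, at most #C. -/
open Cardinal

/-- `T` is closed under initial segments. -/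
def IsTree {C : Type} (T : Set (List C)) : Prop :=
  ∀ σ ∈ T, ∀ τ : List C, τ <+: σ → τ ∈ T

lemma card_toSet_mk (a : PSet.{0}) : #(ZFSet.mk a).toSet ≤ Cardinal.lift.{1} #a.Type := by
  let f : a.Type → (ZFSet.mk a).toSet := fun i => ⟨ZFSet.mk <| a.Func i, ZFSet.mk_mem_iff.mpr (PSet.func_mem a i)⟩
  have hf : Function.Surjective f := by
    rintro ⟨y, hb⟩
    induction y using Quotient.inductionOn
    cases' hb with i h
    exact ⟨i, Subtype.coe_injective (Quotient.sound h.symm)⟩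
  have : Nonempty ((ZFSet.mk a).toSet ↪ a.Type) :=
    ⟨⟨Function.surjInv hf, Function.injective_surjInv hf⟩⟩
  simpa using Cardinal.lift_mk_le'.mpr this

/-- Any set coded by a well-founded tree of finite sequences over `C` is hereditarily of
cardinality at most `#(List C)` — every node (hence every hereditary member of the
decoded root) decodes to a set of cardinality at most `#(List C)` — and for infinite `C`
we have `#(List C) = #C`. -/
theorem hereditarily_card_le (C : Type) (T : Set (List C)) (hT : IsTree T)
    (hwf : WellFounded (Daughter T)) :
    (∀ σ ∈ T, #(ZFSet.mk (decode T hwf σ)).toSet ≤ Cardinal.lift.{1} #(List C)) ∧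
      (Infinite C → #(List C) = #C) := by
  constructor
  · intro σ hσ
    have heq : decode T hwf σ = PSet.mk {c : C // σ ++ [c] ∈ T}
        (fun c => decode T hwf (σ ++ [c.1])) := by
      rw [decode, WellFounded.fix_eq]
    rw [heq]
    refine (card_toSet_mk _).trans (Cardinal.lift_le.mpr ?_)
    calc #{c : C // σ ++ [c] ∈ T} ≤ #C := Cardinal.mk_subtype_le _
      _ ≤ #(List C) := Cardinal.mk_le_of_injective (f := fun c => [c]) (by
          intro a b h; simpa using h)
  · intro h
    exact Cardinal.mk_list_eq_mk C
end
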